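/- For smooth f on a bounded convex open set U ⊆ ℝ^d, ∬_{U×U} ∫_0^1 |∇f((1-t)x + t y)|² dt dx dy ≤ 2 m_U C_d ∫_U |∇f(z)|² dz, where C_d = ∫_{1/2}^1 t^{-d} dt. -/

import Mathlib

/-!
For `t ∈ (1/2, 1)` and fixed `x ∈ U`, the map `y ↦ (1 - t) x + t y` is a homothety of ratio `t`
sending `U` into itself by convexity, so the change of variables gives
`∫_U |∇f((1-t)x + ty)|² dy ≤ t^{-d} ∫_U |∇f|²`, and integrating in `x` costs a factor `m_U`.
For `t ∈ (0, 1/2]` the same argument with the roles of `x` and `y` exchanged gives the weight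
`(1 - t)^{-d}`. Each weight integrates to `C_d` over its half of `(0, 1)`.
-/

open MeasureTheory Set Module
open scoped ENNReal Interval

/-- The dimensional constant `C_d = ∫_{1/2}^1 t^{-d} dt`. -/
noncomputable def Cdim (d : ℕ) : ℝ :=
  if d = 1 then Real.log 2 else ((2 : ℝ) ^ (d - 1) - 1) / ((d : ℝ) - 1)

theorem integral_inv_pow_eq_Cdim {d : ℕ} (hd : 1 ≤ d) :
    ∫ t in (2⁻¹ : ℝ)..1, (t ^ d)⁻¹ = Cdim d := by
  have h0 : (0 : ℝ) ∉ [[(2⁻¹ : ℝ), 1]] := by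
    rw [uIcc_of_le (by norm_num)]; norm_num
  obtain rfl | ⟨k, rfl⟩ : d = 1 ∨ ∃ k, d = k + 2 := by
    rcases hd.eq_or_lt with h | h
    exacts [.inl h.symm, .inr ⟨d - 2, by omega⟩]
  · simp [Cdim, integral_inv h0]
  · have hexp : ∀ t : ℝ, (t ^ (k + 2))⁻¹ = t ^ (-(k + 2 : ℤ)) := fun t => by
      rw [zpow_neg]; norm_cast
    simp_rw [hexp]
    rw [integral_zpow (Or.inr ⟨by omega, h0⟩), Cdim, if_neg (by omega),
      show -(k + 2 : ℤ) + 1 = -(k + 1 : ℕ) by push_cast; ring, inv_zpow', neg_neg, zpow_natCast,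
      one_zpow, show k + 2 - 1 = k + 1 by omega, ← neg_div_neg_eq]
    push_cast
    ring_nf

theorem Cdim_nonneg {d : ℕ} (hd : 1 ≤ d) : 0 ≤ Cdim d := by
  rw [← integral_inv_pow_eq_Cdim hd]
  exact intervalIntegral.integral_nonneg (by norm_num) fun t ht =>
    inv_nonneg.mpr (pow_nonneg ((by norm_num : (0 : ℝ) ≤ 2⁻¹).trans ht.1) d)

theorem lintegral_Ioc_ofReal_eq_intervalIntegral {φ : ℝ → ℝ} {a b : ℝ} (hab : a ≤ b)
    (hφ : ContinuousOn φ (Icc a b)) (hφ₀ : ∀ t ∈ Icc a b, 0 ≤ φ t) :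
    ∫⁻ t in Ioc a b, ENNReal.ofReal (φ t) = ENNReal.ofReal (∫ t in a..b, φ t) := by
  rw [intervalIntegral.integral_of_le hab, ofReal_integral_eq_lintegral_ofReal
    (hφ.integrableOn_Icc.mono_set Ioc_subset_Icc_self)
    (ae_restrict_of_forall_mem measurableSet_Ioc fun t ht => hφ₀ t (Ioc_subset_Icc_self ht))]

theorem lintegral_Ioo_inv_pow_eq_Cdim {d : ℕ} (hd : 1 ≤ d) :
    ∫⁻ t in Ioo (2⁻¹ : ℝ) 1, ENNReal.ofReal (t ^ d)⁻¹ = ENNReal.ofReal (Cdim d) := by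
  have hpos : ∀ t ∈ Icc (2⁻¹ : ℝ) 1, 0 < t := fun t ht => lt_of_lt_of_le (by norm_num) ht.1
  rw [setLIntegral_congr Ioo_ae_eq_Ioc,
    lintegral_Ioc_ofReal_eq_intervalIntegral (φ := fun t => (t ^ d)⁻¹) (by norm_num)
    ((continuousOn_pow d).inv₀ fun t ht => (pow_pos (hpos t ht) d).ne')
    (fun t ht => (inv_pos.mpr (pow_pos (hpos t ht) d)).le), integral_inv_pow_eq_Cdim hd]

theorem lintegral_Ioc_inv_one_sub_pow_eq_Cdim {d : ℕ} (hd : 1 ≤ d) :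
    ∫⁻ t in Ioc (0 : ℝ) 2⁻¹, ENNReal.ofReal ((1 - t) ^ d)⁻¹ = ENNReal.ofReal (Cdim d) := by
  have hpos : ∀ t ∈ Icc (0 : ℝ) 2⁻¹, 0 < 1 - t := fun t ht => by linarith [ht.2]
  rw [lintegral_Ioc_ofReal_eq_intervalIntegral (φ := fun t => ((1 - t) ^ d)⁻¹) (by norm_num)
    (((continuous_const.sub continuous_id).pow d).continuousOn.inv₀
      fun t ht => (pow_pos (hpos t ht) d).ne')
    (fun t ht => (inv_pos.mpr (pow_pos (hpos t ht) d)).le),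
    intervalIntegral.integral_comp_sub_left (fun t => (t ^ d)⁻¹), sub_zero,
    show (1 : ℝ) - 2⁻¹ = 2⁻¹ by norm_num, integral_inv_pow_eq_Cdim hd]

theorem measurable_gradient {F : Type*} [NormedAddCommGroup F] [InnerProductSpace ℝ F]
    [CompleteSpace F] [MeasurableSpace F] [BorelSpace F] (f : F → ℝ) :
    Measurable (gradient f) :=
  (InnerProductSpace.toDual ℝ F).symm.continuous.measurable.comp (measurable_fderiv ℝ f)

theorem ofReal_integral_le_lintegral_of_le {α : Type*} [MeasurableSpace α] {μ : Measure α}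
    {h : α → ℝ} {K : α → ℝ≥0∞} (hh : ∀ a, 0 ≤ h a) (hK : ∀ a, ENNReal.ofReal (h a) ≤ K a) :
    ENNReal.ofReal (∫ a, h a ∂μ) ≤ ∫⁻ a, K a ∂μ := by
  rw [← Real.enorm_eq_ofReal (integral_nonneg hh)]
  refine (enorm_integral_le_lintegral_enorm _).trans (lintegral_mono fun a => ?_)
  rw [Real.enorm_eq_ofReal (hh a)]
  exact hK a

section Homothety

variable {E : Type*} [NormedAddCommGroup E] [NormedSpace ℝ E] [FiniteDimensional ℝ E]
  [MeasurableSpace E] [BorelSpace E] (μ : Measure E) [μ.IsAddHaarMeasure]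

theorem lintegral_comp_add_smul (g : E → ℝ≥0∞) (a : E) {c : ℝ} (hc : c ≠ 0) :
    ∫⁻ v, g (a + c • v) ∂μ = ENNReal.ofReal |(c ^ finrank ℝ E)⁻¹| * ∫⁻ z, g z ∂μ := by
  let e : E ≃ᵐ E := (Homeomorph.smulOfNeZero c hc).toMeasurableEquiv
  calc ∫⁻ v, g (a + c • v) ∂μ = ∫⁻ z, g (a + z) ∂(μ.map e) :=
        (lintegral_map_equiv (fun z => g (a + z)) e).symm
    _ = ENNReal.ofReal |(c ^ finrank ℝ E)⁻¹| * ∫⁻ z, g z ∂μ := by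
        rw [show ⇑e = (c • ·) from rfl, Measure.map_addHaar_smul μ hc, lintegral_smul_measure,
          lintegral_add_left_eq_self, smul_eq_mul]

theorem setLIntegral_comp_lineMap_le {s : Set E} (hs : Convex ℝ s) (g : E → ℝ≥0∞) {w : E}
    (hw : w ∈ s) {c : ℝ} (hc₀ : 0 < c) (hc₁ : c ≤ 1) :
    ∫⁻ v in s, g (AffineMap.lineMap w v c) ∂μ ≤
      ENNReal.ofReal (c ^ finrank ℝ E)⁻¹ * ∫⁻ z in s, g z ∂μ := by
  have hsμ := hs.nullMeasurableSet μ
  calc ∫⁻ v in s, g (AffineMap.lineMap w v c) ∂μ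
      = ∫⁻ v, s.indicator (fun v => g (AffineMap.lineMap w v c)) v ∂μ :=
        (lintegral_indicator₀ hsμ _).symm
    _ ≤ ∫⁻ v, s.indicator g ((1 - c) • w + c • v) ∂μ := by
        refine lintegral_mono fun v => indicator_apply_le' (fun hv => ?_) fun _ => zero_le
        rw [← AffineMap.lineMap_apply_module,
          indicator_of_mem (hs.lineMap_mem hw hv ⟨hc₀.le, hc₁⟩)]
    _ = ENNReal.ofReal (c ^ finrank ℝ E)⁻¹ * ∫⁻ z in s, g z ∂μ := by
        rw [lintegral_comp_add_smul μ _ _ hc₀.ne', lintegral_indicator₀ hsμ,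
          abs_of_pos (by positivity)]

theorem lintegral_lintegral_comp_lineMap_le {s : Set E} (hs : Convex ℝ s) (g : E → ℝ≥0∞) {t : ℝ}
    (ht₀ : 0 < t) (ht₁ : t ≤ 1) :
    ∫⁻ x in s, ∫⁻ y in s, g (AffineMap.lineMap x y t) ∂μ ∂μ ≤
      ENNReal.ofReal (t ^ finrank ℝ E)⁻¹ * (μ s * ∫⁻ z in s, g z ∂μ) := by
  calc ∫⁻ x in s, ∫⁻ y in s, g (AffineMap.lineMap x y t) ∂μ ∂μ
      ≤ ∫⁻ _ in s, ENNReal.ofReal (t ^ finrank ℝ E)⁻¹ * ∫⁻ z in s, g z ∂μ ∂μ :=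
        setLIntegral_mono measurable_const fun x hx =>
          setLIntegral_comp_lineMap_le μ hs g hx ht₀ ht₁
    _ = _ := by rw [setLIntegral_const, mul_assoc, mul_comm (μ s)]

theorem lintegral_lintegral_comp_lineMap_le_one_sub {s : Set E} (hs : Convex ℝ s) {g : E → ℝ≥0∞}
    (hg : Measurable g) {t : ℝ} (ht₀ : 0 ≤ t) (ht₁ : t < 1) :
    ∫⁻ x in s, ∫⁻ y in s, g (AffineMap.lineMap x y t) ∂μ ∂μ ≤
      ENNReal.ofReal ((1 - t) ^ finrank ℝ E)⁻¹ * (μ s * ∫⁻ z in s, g z ∂μ) := by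
  calc ∫⁻ x in s, ∫⁻ y in s, g (AffineMap.lineMap x y t) ∂μ ∂μ
      = ∫⁻ y in s, ∫⁻ x in s, g (AffineMap.lineMap y x (1 - t)) ∂μ ∂μ := by
        have hcont : Continuous fun p : E × E => AffineMap.lineMap p.1 p.2 t := by fun_prop
        simp_rw [AffineMap.lineMap_apply_one_sub]
        exact lintegral_lintegral_swap (hg.comp hcont.measurable).aemeasurable
    _ ≤ _ := lintegral_lintegral_comp_lineMap_le μ hs g (by linarith) (by linarith)

theorem lintegral_lintegral_lintegral_comp_lineMap_le (hE : 1 ≤ finrank ℝ E) {s : Set E}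
    (hs : Convex ℝ s) {g : E → ℝ≥0∞} (hg : Measurable g) :
    ∫⁻ x in s, ∫⁻ y in s, (∫⁻ t in Ioo (0 : ℝ) 1, g (AffineMap.lineMap x y t)) ∂μ ∂μ ≤
      2 * ENNReal.ofReal (Cdim (finrank ℝ E)) * μ s * ∫⁻ z in s, g z ∂μ := by
  set n := finrank ℝ E
  set K := μ s * ∫⁻ z in s, g z ∂μ
  set G : ℝ → ℝ≥0∞ := fun t => ∫⁻ x in s, ∫⁻ y in s, g (AffineMap.lineMap x y t) ∂μ ∂μ
  have hswap : ∫⁻ x in s, ∫⁻ y in s, (∫⁻ t in Ioo (0 : ℝ) 1, g (AffineMap.lineMap x y t)) ∂μ ∂μ =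
      ∫⁻ t in Ioo (0 : ℝ) 1, G t := by
    have hcont : Continuous fun p : (E × ℝ) × E => AffineMap.lineMap p.1.1 p.2 p.1.2 := by
      fun_prop
    have hF := hg.comp hcont.measurable
    calc _ = ∫⁻ x in s, (∫⁻ t in Ioo (0 : ℝ) 1, ∫⁻ y in s, g (AffineMap.lineMap x y t) ∂μ) ∂μ :=
          lintegral_congr fun x => lintegral_lintegral_swap
            (hF.comp ((measurable_const.prodMk measurable_snd).prodMk measurable_fst)).aemeasurable
      _ = _ := lintegral_lintegral_swap hF.lintegral_prod_right'.aemeasurable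
  have hsmall : ∫⁻ t in Ioc (0 : ℝ) 2⁻¹, G t ≤ ENNReal.ofReal (Cdim n) * K :=
    calc ∫⁻ t in Ioc (0 : ℝ) 2⁻¹, G t
        ≤ ∫⁻ t in Ioc (0 : ℝ) 2⁻¹, ENNReal.ofReal ((1 - t) ^ n)⁻¹ * K :=
          setLIntegral_mono (by fun_prop) fun t ht =>
            lintegral_lintegral_comp_lineMap_le_one_sub μ hs hg ht.1.le (by linarith [ht.2])
      _ = ENNReal.ofReal (Cdim n) * K := by
          rw [lintegral_mul_const _ (by fun_prop), lintegral_Ioc_inv_one_sub_pow_eq_Cdim hE]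
  have hlarge : ∫⁻ t in Ioo (2⁻¹ : ℝ) 1, G t ≤ ENNReal.ofReal (Cdim n) * K :=
    calc ∫⁻ t in Ioo (2⁻¹ : ℝ) 1, G t
        ≤ ∫⁻ t in Ioo (2⁻¹ : ℝ) 1, ENNReal.ofReal (t ^ n)⁻¹ * K :=
          setLIntegral_mono (by fun_prop) fun t ht =>
            lintegral_lintegral_comp_lineMap_le μ hs g (by linarith [ht.1]) ht.2.le
      _ = ENNReal.ofReal (Cdim n) * K := by
          rw [lintegral_mul_const _ (by fun_prop), lintegral_Ioo_inv_pow_eq_Cdim hE]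
  calc _ = ∫⁻ t in Ioo (0 : ℝ) 1, G t := hswap
    _ = (∫⁻ t in Ioc (0 : ℝ) 2⁻¹, G t) + ∫⁻ t in Ioo (2⁻¹ : ℝ) 1, G t := by
        rw [← Ioc_union_Ioo_eq_Ioo (b := 2⁻¹) (by norm_num) (by norm_num),
          lintegral_union measurableSet_Ioo (disjoint_left.mpr fun t h₁ h₂ => h₂.1.not_ge h₁.2)]
    _ ≤ ENNReal.ofReal (Cdim n) * K + ENNReal.ofReal (Cdim n) * K := add_le_add hsmall hlarge
    _ = 2 * ENNReal.ofReal (Cdim n) * μ s * ∫⁻ z in s, g z ∂μ := by ring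

theorem integral_integral_integral_comp_lineMap_le (hE : 1 ≤ finrank ℝ E) {s : Set E}
    (hs : Convex ℝ s) (hμs : μ s ≠ ∞) {g : E → ℝ} (hg : Measurable g) (hg₀ : ∀ z, 0 ≤ g z)
    (hgs : IntegrableOn g s μ) :
    ∫ x in s, ∫ y in s, (∫ t in Ioo (0 : ℝ) 1, g (AffineMap.lineMap x y t)) ∂μ ∂μ ≤
      2 * (μ s).toReal * Cdim (finrank ℝ E) * ∫ z in s, g z ∂μ := by
  have hC := Cdim_nonneg hE
  have hRHS : ENNReal.ofReal (2 * (μ s).toReal * Cdim (finrank ℝ E) * ∫ z in s, g z ∂μ) =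
      2 * ENNReal.ofReal (Cdim (finrank ℝ E)) * μ s * ∫⁻ z in s, ENNReal.ofReal (g z) ∂μ := by
    rw [ENNReal.ofReal_mul (by positivity), ENNReal.ofReal_mul (by positivity),
      ENNReal.ofReal_mul (by positivity), ENNReal.ofReal_ofNat, ENNReal.ofReal_toReal hμs,
      ofReal_integral_eq_lintegral_ofReal hgs (ae_of_all _ hg₀)]
    ring
  refine (ENNReal.ofReal_le_ofReal_iff ?_).mp ?_
  · exact mul_nonneg (by positivity) (setIntegral_nonneg_of_ae (ae_of_all _ hg₀))
  rw [hRHS]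
  refine le_trans ?_ (lintegral_lintegral_lintegral_comp_lineMap_le μ hE hs hg.ennreal_ofReal)
  exact ofReal_integral_le_lintegral_of_le
    (fun x => integral_nonneg fun y => integral_nonneg fun t => hg₀ _) fun x =>
    ofReal_integral_le_lintegral_of_le (fun y => integral_nonneg fun t => hg₀ _) fun y =>
    ofReal_integral_le_lintegral_of_le (fun t => hg₀ _) fun t => le_rfl

end Homothety

theorem segment_gradient_bound_general {d : ℕ} (hd : 1 ≤ d) (U : Set (EuclideanSpace ℝ (Fin d)))
    (hUc : Convex ℝ U) (hUb : Bornology.IsBounded U)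
    (f : EuclideanSpace ℝ (Fin d) → ℝ)
    (hgrad2 : MemLp (fun z => ‖gradient f z‖) 2 (volume.restrict U)) :
    ∫ x in U, ∫ y in U, ∫ t in Set.Ioo (0 : ℝ) 1, ‖gradient f ((1 - t) • x + t • y)‖ ^ 2 ≤
      2 * (volume U).toReal * Cdim d * ∫ z in U, ‖gradient f z‖ ^ 2 := by
  have h := integral_integral_integral_comp_lineMap_le volume (by rwa [finrank_euclideanSpace_fin])
    hUc hUb.measure_lt_top.ne ((measurable_gradient f).norm.pow_const 2)
    (fun z => by positivity) hgrad2.integrable_sq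
  simpa only [AffineMap.lineMap_apply_module, finrank_euclideanSpace_fin] using h

/-- For smooth `f` on a bounded convex open `U ⊆ ℝ^d`,
`∬_{U×U} ∫₀¹ |∇f((1−t)x + ty)|² dt dx dy ≤ 2 m_U C_d ∫_U |∇f|²`. -/
theorem segment_gradient_bound {d : ℕ} (hd : 1 ≤ d) (U : Set (EuclideanSpace ℝ (Fin d)))
    (hUo : IsOpen U) (hUc : Convex ℝ U) (hUb : Bornology.IsBounded U)
    (f : EuclideanSpace ℝ (Fin d) → ℝ) (hf : ContDiffOn ℝ 1 f U)
    (hgrad2 : MemLp (fun z => ‖gradient f z‖) 2 (volume.restrict U)) :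
    ∫ x in U, ∫ y in U, ∫ t in Set.Ioo (0 : ℝ) 1, ‖gradient f ((1 - t) • x + t • y)‖ ^ 2 ≤
      2 * (volume U).toReal * Cdim d * ∫ z in U, ‖gradient f z‖ ^ 2 :=
  segment_gradient_bound_general hd U hUc hUb f hgrad2
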